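/- Let ν be a nonnegative σ-finite Borel measure on [0,∞) and γ ≥ 0. If liminf_{t→0⁺} t^γ ∫_{[0,∞)} e^{-st} dν(s) > 0 and limsup_{t→0⁺} t^γ ∫_{[0,∞)} e^{-st} dν(s) < ∞, then liminf_{λ→∞} ν([0,λ])/λ^γ > 0. -/

import Mathlib

/-!
Write `L(t) = ∫_{[0,∞)} e^{-st} dν(s)`. Splitting at `λ` and using `e^{-st} ≤ e^{-λt/2} e^{-st/2}`
for `s > λ` gives `L(t) ≤ ν[0,λ] + e^{-λt/2} L(t/2)`. For small `t` the hypotheses pinch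
`t^γ L(t)` between some `m > 0` and some `B < ∞`; taking `t = c/λ`, the second term then contributes
at most `2^γ e^{-c/2} B ≤ m/2` once `c` is large, so `(c/λ)^γ ν[0,λ] ≥ m/2` for all large `λ`.
-/

open MeasureTheory Filter Set Real
open scoped ENNReal Topology

noncomputable def laplaceIci (ν : Measure ℝ) (t : ℝ) : ℝ≥0∞ :=
  ∫⁻ s in Ici 0, ENNReal.ofReal (exp (-s * t)) ∂ν

lemma ofReal_exp_neg_mul_le_indicator_add {s t : ℝ} (hs : 0 ≤ s) (ht : 0 ≤ t) (lam : ℝ) :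
    ENNReal.ofReal (exp (-s * t)) ≤ (Icc 0 lam).indicator 1 s +
      ENNReal.ofReal (exp (-(lam * t) / 2)) * ENNReal.ofReal (exp (-s * (t / 2))) := by
  by_cases hlam : s ≤ lam
  · rw [indicator_of_mem (show s ∈ Icc 0 lam from ⟨hs, hlam⟩), Pi.one_apply]
    refine le_add_right (ENNReal.ofReal_le_one.mpr (exp_le_one_iff.mpr ?_))
    nlinarith
  · rw [indicator_of_notMem (fun h => hlam h.2), zero_add,
      ← ENNReal.ofReal_mul (exp_nonneg _), ← exp_add]
    gcongr
    nlinarith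

lemma laplaceIci_le (ν : Measure ℝ) {t : ℝ} (ht : 0 ≤ t) (lam : ℝ) :
    laplaceIci ν t ≤ ν (Icc 0 lam) +
      ENNReal.ofReal (exp (-(lam * t) / 2)) * laplaceIci ν (t / 2) := by
  calc laplaceIci ν t
      ≤ ∫⁻ s in Ici 0, (Icc 0 lam).indicator 1 s +
          ENNReal.ofReal (exp (-(lam * t) / 2)) * ENNReal.ofReal (exp (-s * (t / 2))) ∂ν :=
        setLIntegral_mono' measurableSet_Ici fun _ hs =>
          ofReal_exp_neg_mul_le_indicator_add hs ht lam
    _ = ν.restrict (Ici 0) (Icc 0 lam) +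
          ENNReal.ofReal (exp (-(lam * t) / 2)) * laplaceIci ν (t / 2) := by
        rw [lintegral_add_left (measurable_one.indicator measurableSet_Icc),
          lintegral_indicator_one measurableSet_Icc, lintegral_const_mul' _ _ ENNReal.ofReal_ne_top]
        rfl
    _ ≤ _ := by grw [Measure.restrict_apply_le]

lemma rpow_mul_laplaceIci_le (ν : Measure ℝ) (γ : ℝ) {t : ℝ} (ht : 0 ≤ t) (lam : ℝ) :
    ENNReal.ofReal (t ^ γ) * laplaceIci ν t ≤ ENNReal.ofReal (t ^ γ) * ν (Icc 0 lam) +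
      ENNReal.ofReal (2 ^ γ * exp (-(lam * t) / 2)) *
        (ENNReal.ofReal ((t / 2) ^ γ) * laplaceIci ν (t / 2)) := by
  have hsplit : ENNReal.ofReal (t ^ γ) =
      ENNReal.ofReal (2 ^ γ) * ENNReal.ofReal ((t / 2) ^ γ) := by
    rw [← ENNReal.ofReal_mul (by positivity), ← mul_rpow (by norm_num) (by positivity)]
    ring_nf
  calc ENNReal.ofReal (t ^ γ) * laplaceIci ν t
      ≤ ENNReal.ofReal (t ^ γ) * (ν (Icc 0 lam) +
          ENNReal.ofReal (exp (-(lam * t) / 2)) * laplaceIci ν (t / 2)) := by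
        gcongr; exact laplaceIci_le ν ht lam
    _ = _ := by
        rw [mul_add, ENNReal.ofReal_mul (by positivity), hsplit]
        ring

lemma exists_pos_ofReal_mul_exp_neg_div_two_mul_le (a : ℝ) {B ε : ℝ≥0∞} (hB : B ≠ ⊤)
    (hε : 0 < ε) :
    ∃ c > 0, ENNReal.ofReal (a * exp (-c / 2)) * B ≤ ε := by
  have hlim : Tendsto (fun c : ℝ => ENNReal.ofReal (a * exp (-c / 2)) * B) atTop (𝓝 0) := by
    have hexp : Tendsto (fun c : ℝ => a * exp (-c / 2)) atTop (𝓝 0) := by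
      simpa using (tendsto_exp_atBot.comp
        (tendsto_neg_atTop_atBot.atBot_div_const two_pos)).const_mul a
    simpa using ENNReal.Tendsto.mul_const (ENNReal.tendsto_ofReal hexp) (Or.inr hB)
  obtain ⟨c, hc, hc0⟩ := ((hlim.eventually (ge_mem_nhds hε)).and (eventually_gt_atTop 0)).exists
  exact ⟨c, hc0, hc⟩

lemma div_ofReal_rpow_le_div {a x : ℝ≥0∞} {c lam γ : ℝ} (hc : 0 < c) (hlam : 0 < lam)
    (h : a ≤ ENNReal.ofReal ((c / lam) ^ γ) * x) :
    a / ENNReal.ofReal (c ^ γ) ≤ x / ENNReal.ofReal (lam ^ γ) := by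
  refine ENNReal.div_le_of_le_mul ?_
  rw [div_rpow hc.le hlam.le, ENNReal.ofReal_div_of_pos (by positivity)] at h
  rw [div_eq_mul_inv] at h ⊢
  convert h using 1
  ring

lemma liminf_div_rpow_pos_of_le {F N : ℝ → ℝ≥0∞} {γ : ℝ}
    (hF : ∀ t > 0, ∀ lam, F t ≤ ENNReal.ofReal (t ^ γ) * N lam +
      ENNReal.ofReal (2 ^ γ * exp (-(lam * t) / 2)) * F (t / 2))
    (h1 : 0 < liminf F (𝓝[>] 0)) (h2 : limsup F (𝓝[>] 0) < ⊤) :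
    0 < liminf (fun lam => N lam / ENNReal.ofReal (lam ^ γ)) atTop := by
  obtain ⟨m, hm0, hm⟩ := exists_between h1
  obtain ⟨B, hB, hBtop⟩ := exists_between h2
  have hm_top : m ≠ ⊤ := (hm.trans_le le_top).ne
  obtain ⟨δ, hδ, hbounds⟩ : ∃ δ > 0, Ioo 0 δ ⊆ {t | m < F t ∧ F t < B} :=
    mem_nhdsGT_iff_exists_Ioo_subset.mp
      ((eventually_lt_of_lt_liminf hm).and (eventually_lt_of_limsup_lt hB))
  obtain ⟨c, hc, hcB⟩ := exists_pos_ofReal_mul_exp_neg_div_two_mul_le (2 ^ γ) hBtop.ne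
    (ENNReal.half_pos hm0.ne')
  refine lt_of_lt_of_le (b := m / 2 / ENNReal.ofReal (c ^ γ))
    (ENNReal.div_pos (ENNReal.half_pos hm0.ne').ne' ENNReal.ofReal_ne_top)
    (le_liminf_of_le (by isBoundedDefault) ?_)
  filter_upwards [eventually_gt_atTop (c / δ)] with lam hlam
  have hlam0 : 0 < lam := (div_pos hc hδ).trans hlam
  set t := c / lam with ht
  have ht0 : 0 < t := div_pos hc hlam0
  have htδ : t < δ := by rwa [ht, div_lt_iff₀ hlam0, mul_comm, ← div_lt_iff₀ hδ]
  have hlt : lam * t = c := by rw [ht]; field_simp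
  refine div_ofReal_rpow_le_div hc hlam0 (le_of_lt ?_)
  rw [← ENNReal.add_lt_add_iff_right (ENNReal.div_ne_top hm_top two_ne_zero), ENNReal.add_halves]
  calc m < F t := (hbounds ⟨ht0, htδ⟩).1
    _ ≤ ENNReal.ofReal (t ^ γ) * N lam + ENNReal.ofReal (2 ^ γ * exp (-c / 2)) * F (t / 2) := by
      simpa [hlt] using hF t ht0 lam
    _ ≤ ENNReal.ofReal (t ^ γ) * N lam + ENNReal.ofReal (2 ^ γ * exp (-c / 2)) * B := by
      gcongr; exact (hbounds ⟨half_pos ht0, by linarith⟩).2.le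
    _ ≤ ENNReal.ofReal (t ^ γ) * N lam + m / 2 := by gcongr

theorem tauberian_liminf_pos_general
    (ν : Measure ℝ)
    (γ : ℝ)
    (h1 : 0 < Filter.liminf (fun t : ℝ =>
        ENNReal.ofReal (t ^ γ) *
          ∫⁻ s in Set.Ici (0:ℝ), ENNReal.ofReal (Real.exp (-s * t)) ∂ν)
      (nhdsWithin 0 (Set.Ioi 0)))
    (h2 : Filter.limsup (fun t : ℝ =>
        ENNReal.ofReal (t ^ γ) *
          ∫⁻ s in Set.Ici (0:ℝ), ENNReal.ofReal (Real.exp (-s * t)) ∂ν)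
      (nhdsWithin 0 (Set.Ioi 0)) < ⊤) :
    0 < Filter.liminf (fun lam : ℝ => ν (Set.Icc 0 lam) / ENNReal.ofReal (lam ^ γ))
      atTop :=
  liminf_div_rpow_pos_of_le (F := fun t => ENNReal.ofReal (t ^ γ) * laplaceIci ν t)
    (fun _ ht lam => rpow_mul_laplaceIci_le ν γ ht.le lam) h1 h2

/-- One-sided Tauberian positivity: if `liminf_{t→0⁺} t^γ ∫ e^{-st} dν(s) > 0` and
`limsup_{t→0⁺} t^γ ∫ e^{-st} dν(s) < ∞`, then `liminf_{λ→∞} ν([0,λ])/λ^γ > 0`. -/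
theorem tauberian_liminf_pos
    (ν : Measure ℝ) [SigmaFinite ν] (hν : ν (Set.Iio 0) = 0)
    (γ : ℝ) (hγ : 0 ≤ γ)
    (h1 : 0 < Filter.liminf (fun t : ℝ =>
        ENNReal.ofReal (t ^ γ) *
          ∫⁻ s in Set.Ici (0:ℝ), ENNReal.ofReal (Real.exp (-s * t)) ∂ν)
      (nhdsWithin 0 (Set.Ioi 0)))
    (h2 : Filter.limsup (fun t : ℝ =>
        ENNReal.ofReal (t ^ γ) *
          ∫⁻ s in Set.Ici (0:ℝ), ENNReal.ofReal (Real.exp (-s * t)) ∂ν)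
      (nhdsWithin 0 (Set.Ioi 0)) < ⊤) :
    0 < Filter.liminf (fun lam : ℝ => ν (Set.Icc 0 lam) / ENNReal.ofReal (lam ^ γ))
      atTop :=
  tauberian_liminf_pos_general ν γ h1 h2
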